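/- Let X : Ω → ℝ^m and V : Ω → ℝ^t be jointly centered Gaussian with block covariance Σ = [[Σ_xx, Σ_xv],[Σ_xvᵀ, Σ_vv]], Σ_vv positive definite, and let S ⊆ ℝ^t be measurable with P(V ∈ S) > 0. Write A = Σ_xv Σ_vv⁻¹ and Σ_sch = Σ_xx − A Σ_xvᵀ, fix indices i, j, and suppose s² := (Σ_sch)_{ii} + (Σ_sch)_{jj} − 2 (Σ_sch)_{ij} > 0. Then P(X_i ≤ X_j | V ∈ S) = E[ Φ( ((A V)_j − (A V)_i) / s ) | V ∈ S ], where Φ is the standard normal cumulative distribution function and E[· | V ∈ S] is the expectation under the conditioned measure P(· | V ∈ S). -/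

import Mathlib

open MeasureTheory ProbabilityTheory Matrix
open scoped ProbabilityTheory

/-- The standard Gaussian measure on `ℝ^n`. -/
noncomputable def stdGaussianPi (n : ℕ) : Measure (Fin n → ℝ) :=
  Measure.pi fun _ => gaussianReal 0 1

open scoped Classical in
/-- The multivariate Gaussian measure `N(μ, S)` on `ℝ^n`, defined as the pushforward of the
standard Gaussian under `x ↦ μ + √S x` when `S` is positive semidefinite. -/
noncomputable def multivariateGaussian {n : ℕ} (μ : Fin n → ℝ)
    (S : Matrix (Fin n) (Fin n) ℝ) : Measure (Fin n → ℝ) :=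
  if hS : S.PosSemidef then (stdGaussianPi n).map (fun x => μ +
    ((hS.1.eigenvectorUnitary : Matrix (Fin n) (Fin n) ℝ) *
      diagonal ((RCLike.ofReal : ℝ → ℝ) ∘ (√·) ∘ hS.1.eigenvalues) *
      (star (hS.1.eigenvectorUnitary : Matrix (Fin n) (Fin n) ℝ))).mulVec x) else 0

/-- The block matrix `[[Sxx, Sxv], [Sxvᵀ, Svv]]` as a matrix on `Fin (m + t)`. -/
noncomputable def blockCov {m t : ℕ} (Sxx : Matrix (Fin m) (Fin m) ℝ)
    (Sxv : Matrix (Fin m) (Fin t) ℝ) (Svv : Matrix (Fin t) (Fin t) ℝ) :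
    Matrix (Fin (m + t)) (Fin (m + t)) ℝ :=
  Matrix.reindex finSumFinEquiv finSumFinEquiv (Matrix.fromBlocks Sxx Sxv Sxvᵀ Svv)

/-- The cumulative distribution function of the standard normal distribution. -/
noncomputable def stdNormalCDF (x : ℝ) : ℝ := (gaussianReal 0 1 (Set.Iic x)).toReal

/-!
Put `A = Σ_xv Σ_vv⁻¹`. For `x ∈ ℝ^m` the vector `c = (x, -Aᵀx)` satisfies the Schur complement
identity `Σ c = (Σ_sch x, 0)`, so the regression residual `R = ⟪c, (X, V)⟫ = ⟪x, X⟫ - ⟪x, A V⟫`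
is uncorrelated with `V`. As `(R, V)` is jointly Gaussian, `R` is independent of `V` and
`R ~ N(0, ⟪x, Σ_sch x⟫)`. Conditioning on `V` then gives
`P(⟪x, X⟫ ≤ 0 | V) = P(R ≤ -⟪x, A V⟫ | V) = Φ(-⟪x, A V⟫ / s)` with `s² = ⟪x, Σ_sch x⟫`;
the duel is the case `x = e_i - e_j`.
-/

open WithLp
open scoped RealInnerProductSpace MatrixOrder

theorem Matrix.PosSemidef.sqrt_eq_spectral {n : Type*} [Fintype n] [DecidableEq n]
    {S : Matrix n n ℝ} (hS : S.PosSemidef) :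
    CFC.sqrt S = (hS.1.eigenvectorUnitary : Matrix n n ℝ) *
      diagonal ((RCLike.ofReal : ℝ → ℝ) ∘ (√·) ∘ hS.1.eigenvalues) *
      star (hS.1.eigenvectorUnitary : Matrix n n ℝ) := by
  rw [CFC.sqrt_eq_cfc, cfc_nnreal_eq_real _ S, hS.1.cfc_eq, IsHermitian.cfc,
    Unitary.conjStarAlgAut_apply]
  congr 3
  ext k
  simp [max_eq_left (hS.eigenvalues_nonneg k)]

theorem Matrix.isSymm_sub_mul_nonsing_inv_mul_transpose {m n R : Type*} [Fintype n]
    [DecidableEq n] [CommRing R] {Sxx : Matrix m m R} {Sxv : Matrix m n R} {Svv : Matrix n n R}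
    (hxx : Sxx.IsSymm) (hvv : Svv.IsSymm) : (Sxx - Sxv * Svv⁻¹ * Sxvᵀ).IsSymm :=
  hxx.sub <| by
    rw [IsSymm, transpose_mul, transpose_mul, transpose_transpose, transpose_nonsing_inv, hvv.eq,
      Matrix.mul_assoc]

theorem Matrix.IsSymm.single_sub_single_dotProduct_mulVec {n R : Type*} [Fintype n]
    [DecidableEq n] [CommRing R] {G : Matrix n n R} (hG : G.IsSymm) (i j : n) :
    (Pi.single i 1 - Pi.single j 1) ⬝ᵥ G *ᵥ (Pi.single i 1 - Pi.single j 1) =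
      G i i + G j j - 2 * G i j := by
  simp only [mulVec_sub, mulVec_single_one, sub_dotProduct, single_one_dotProduct, Pi.sub_apply,
    col_apply, hG.apply i j]
  ring

theorem Fin.append_dotProduct_append {R : Type*} [NonUnitalNonAssocSemiring R] {m n : ℕ}
    (a c : Fin m → R) (b d : Fin n → R) :
    Fin.append a b ⬝ᵥ Fin.append c d = a ⬝ᵥ c + b ⬝ᵥ d := by
  simp [dotProduct, Fin.sum_univ_add]

theorem inner_toLp_append_neg_vecMul {m t : ℕ} (A : Matrix (Fin m) (Fin t) ℝ)
    (x y : Fin m → ℝ) (v : Fin t → ℝ) :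
    ⟪toLp 2 (Fin.append x (-(x ᵥ* A))), toLp 2 (Fin.append y v)⟫ = x ⬝ᵥ y - x ⬝ᵥ A *ᵥ v := by
  rw [EuclideanSpace.inner_toLp_toLp, star_trivial, Fin.append_dotProduct_append, dotProduct_neg,
    dotProduct_comm y, dotProduct_comm v, ← dotProduct_mulVec, sub_eq_add_neg]

theorem Measurable.finAppend {α β : Type*} [MeasurableSpace α] [MeasurableSpace β] {m n : ℕ}
    {f : α → Fin m → β} {g : α → Fin n → β} (hf : Measurable f) (hg : Measurable g) :
    Measurable fun a ↦ Fin.append (f a) (g a) :=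
  measurable_pi_iff.2 fun k ↦ by
    induction k using Fin.addCases <;> simp only [Fin.append_left, Fin.append_right] <;> fun_prop

section BlockCov

variable {m t : ℕ} {Sxx : Matrix (Fin m) (Fin m) ℝ} {Sxv : Matrix (Fin m) (Fin t) ℝ}
  {Svv : Matrix (Fin t) (Fin t) ℝ}

theorem isSymm_of_isSymm_blockCov (h : (blockCov Sxx Sxv Svv).IsSymm) : Sxx.IsSymm :=
  (isSymm_fromBlocks_iff.1 ((isSymm_reindex_iff _).1 h)).1

theorem blockCov_mulVec_append (x : Fin m → ℝ) (v : Fin t → ℝ) :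
    blockCov Sxx Sxv Svv *ᵥ Fin.append x v =
      Fin.append (Sxx *ᵥ x + Sxv *ᵥ v) (Sxvᵀ *ᵥ x + Svv *ᵥ v) := by
  ext k
  induction k using Fin.addCases <;> simp [blockCov, mulVec, dotProduct, Fin.sum_univ_add]

theorem blockCov_mulVec_append_neg_vecMul (hvv : Svv.IsSymm) (hdet : IsUnit Svv.det)
    (x : Fin m → ℝ) :
    blockCov Sxx Sxv Svv *ᵥ Fin.append x (-(x ᵥ* (Sxv * Svv⁻¹))) =
      Fin.append ((Sxx - Sxv * Svv⁻¹ * Sxvᵀ) *ᵥ x) 0 := by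
  have hAt : (Sxv * Svv⁻¹)ᵀ = Svv⁻¹ * Sxvᵀ := by
    rw [transpose_mul, transpose_nonsing_inv, hvv.eq]
  rw [blockCov_mulVec_append, ← mulVec_transpose, hAt, mulVec_neg, mulVec_neg, mulVec_mulVec,
    mulVec_mulVec, ← Matrix.mul_assoc Svv, mul_nonsing_inv _ hdet, Matrix.one_mul, add_neg_cancel,
    ← Matrix.mul_assoc, sub_mulVec, sub_eq_add_neg]

end BlockCov

theorem multivariateGaussian_eq_map_ofLp {n : ℕ} (μ : Fin n → ℝ) {S : Matrix (Fin n) (Fin n) ℝ}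
    (hS : S.PosSemidef) :
    _root_.multivariateGaussian μ S =
      (ProbabilityTheory.multivariateGaussian (toLp 2 μ) S).map ofLp := by
  rw [_root_.multivariateGaussian, dif_pos hS, ProbabilityTheory.multivariateGaussian,
    ← map_pi_eq_stdGaussian, Measure.map_map (by fun_prop) (by fun_prop),
    Measure.map_map (by fun_prop) (by fun_prop), stdGaussianPi, ← hS.sqrt_eq_spectral]
  congr

theorem cdf_gaussianReal_zero {v : ℝ} (hv : 0 < v) (x : ℝ) :
    cdf (gaussianReal 0 v.toNNReal) x = stdNormalCDF (x / √v) := by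
  have hscale : gaussianReal 0 v.toNNReal = (gaussianReal 0 1).map (√v * ·) := by
    rw [gaussianReal_map_const_mul, mul_zero, mul_one]
    congr
    ext
    simp [Real.sq_sqrt hv.le, hv.le]
  have hIic : (√v * ·) ⁻¹' Set.Iic x = Set.Iic (x / √v) := by
    ext a
    simp [le_div_iff₀ (Real.sqrt_pos.2 hv), mul_comm]
  rw [cdf_eq_real, measureReal_def, hscale,
    Measure.map_apply (measurable_const_mul _) measurableSet_Iic, hIic, stdNormalCDF]

namespace ProbabilityTheory

variable {Ω : Type*} [MeasurableSpace Ω] {P : Measure Ω}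

section MultivariateGaussian

theorem posSemidef_of_map_eq_multivariateGaussian [IsProbabilityMeasure P] {n : ℕ}
    {Z : Ω → Fin n → ℝ} (hZ : AEMeasurable Z P) {μ : Fin n → ℝ} {S : Matrix (Fin n) (Fin n) ℝ}
    (h : P.map Z = _root_.multivariateGaussian μ S) : S.PosSemidef := by
  by_contra hS
  have := (Measure.isProbabilityMeasure_map (μ := P) hZ).ne_zero
  rw [h, _root_.multivariateGaussian, dif_neg hS] at this
  exact this rfl

theorem hasLaw_toLp_of_map_eq_multivariateGaussian [IsProbabilityMeasure P] {n : ℕ}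
    {Z : Ω → Fin n → ℝ} (hZ : AEMeasurable Z P) {μ : Fin n → ℝ} {S : Matrix (Fin n) (Fin n) ℝ}
    (h : P.map Z = _root_.multivariateGaussian μ S) :
    HasLaw (fun ω ↦ toLp 2 (Z ω)) (multivariateGaussian (toLp 2 μ) S) P where
  map_eq := by
    change P.map (toLp 2 ∘ Z) = _
    rw [← AEMeasurable.map_map_of_aemeasurable (by fun_prop) hZ, h,
      multivariateGaussian_eq_map_ofLp μ (posSemidef_of_map_eq_multivariateGaussian hZ h),
      Measure.map_map (by fun_prop) (by fun_prop)]
    exact Measure.map_id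

variable {ι : Type*} [Fintype ι] [DecidableEq ι] {μ : EuclideanSpace ℝ ι} {S : Matrix ι ι ℝ}
  {Y : Ω → EuclideanSpace ℝ ι}

theorem HasLaw.covariance_inner_multivariateGaussian
    (hY : HasLaw Y (multivariateGaussian μ S) P) (hS : S.PosSemidef) (x y : EuclideanSpace ℝ ι) :
    cov[fun ω ↦ ⟪x, Y ω⟫, fun ω ↦ ⟪y, Y ω⟫; P] = x ⬝ᵥ S *ᵥ y := by
  rw [hY.covariance_fun_comp (by fun_prop) (by fun_prop), ← covarianceBilin_apply_eq_cov
    IsGaussian.memLp_two_id, covarianceBilin_multivariateGaussian hS]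

theorem HasLaw.map_inner_multivariateGaussian
    (hY : HasLaw Y (multivariateGaussian μ S) P) (hS : S.PosSemidef) (x : EuclideanSpace ℝ ι) :
    P.map (fun ω ↦ ⟪x, Y ω⟫) = gaussianReal ⟪x, μ⟫ (x ⬝ᵥ S *ᵥ x).toNNReal := by
  have hmean : P[fun ω ↦ ⟪x, Y ω⟫] = ⟪x, μ⟫ := by
    rw [← integral_id_multivariateGaussian (μ := μ) (S := S), ← integral_inner
      IsGaussian.integrable_fun_id]
    exact hY.integral_comp (by fun_prop)
  have hvar : Var[fun ω ↦ ⟪x, Y ω⟫; P] = x ⬝ᵥ S *ᵥ x := by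
    rw [← covariance_self (by fun_prop), hY.covariance_inner_multivariateGaussian hS]
  have hW : HasGaussianLaw (fun ω ↦ ⟪x, Y ω⟫) P := hY.hasGaussianLaw.map_fun (innerSL ℝ x)
  rw [hW.map_eq_gaussianReal, hmean, hvar]

theorem HasGaussianLaw.indepFun_inner_of_covariance_eq_zero {E κ : Type*}
    [NormedAddCommGroup E] [InnerProductSpace ℝ E] [MeasurableSpace E] [BorelSpace E] [Fintype κ]
    {Z : Ω → E} (hZ : HasGaussianLaw Z P) (x : E) (y : κ → E)
    (h : ∀ k, cov[fun ω ↦ ⟪x, Z ω⟫, fun ω ↦ ⟪y k, Z ω⟫; P] = 0) :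
    IndepFun (fun ω ↦ ⟪x, Z ω⟫) (fun ω k ↦ ⟪y k, Z ω⟫) P := by
  have hpair : HasGaussianLaw (fun ω ↦ (fun _ : Unit ↦ ⟪x, Z ω⟫, fun k ↦ ⟪y k, Z ω⟫)) P :=
    hZ.map_fun (((ContinuousLinearMap.pi fun _ ↦ innerSL ℝ x).prod
      (ContinuousLinearMap.pi fun k ↦ innerSL ℝ (y k)) : E →L[ℝ] (Unit → ℝ) × (κ → ℝ)))
  exact (hpair.indepFun_of_covariance_eval fun _ k ↦ h k).comp (measurable_pi_apply ())
    measurable_id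

theorem HasLaw.indepFun_inner_of_mulVec_eq_zero (hY : HasLaw Y (multivariateGaussian μ S) P)
    (hS : S.PosSemidef) (x : EuclideanSpace ℝ ι) {κ : Type*} [Fintype κ] (f : κ → ι)
    (hx : ∀ k, (S *ᵥ x) (f k) = 0) :
    IndepFun (fun ω ↦ ⟪x, Y ω⟫) (fun ω k ↦ Y ω (f k)) P := by
  have := hY.hasGaussianLaw.indepFun_inner_of_covariance_eq_zero x
    (fun k ↦ EuclideanSpace.single (f k) 1) fun k ↦ by
      rw [covariance_comm, hY.covariance_inner_multivariateGaussian hS]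
      simp [hx]
  simpa [EuclideanSpace.inner_single_left] using this

end MultivariateGaussian

section Conditioning

variable {β : Type*} [MeasurableSpace β] [IsProbabilityMeasure P] {W : Ω → ℝ} {V : Ω → β}
  {h : β → ℝ} {S : Set β}

theorem IndepFun.measure_inter_le_comp (hWV : IndepFun W V P) (hW : Measurable W)
    (hV : Measurable V) (hh : Measurable h) (hS : MeasurableSet S) :
    P (V ⁻¹' S ∩ {ω | W ω ≤ h (V ω)}) =
      ∫⁻ ω in V ⁻¹' S, ENNReal.ofReal (cdf (P.map W) (h (V ω))) ∂P := by
  have := Measure.isProbabilityMeasure_map (μ := P) hW.aemeasurable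
  set E : Set (ℝ × β) := {p | p.2 ∈ S ∧ p.1 ≤ h p.2}
  have hE : MeasurableSet E :=
    (measurable_snd hS).inter (measurableSet_le measurable_fst (hh.comp measurable_snd))
  have hslice (v : β) : P.map W ((fun w ↦ (w, v)) ⁻¹' E) =
      S.indicator (fun v ↦ ENNReal.ofReal (cdf (P.map W) (h v))) v := by
    by_cases hv : v ∈ S <;> simp [E, hv, ofReal_cdf, Set.Iic]
  calc P (V ⁻¹' S ∩ {ω | W ω ≤ h (V ω)})
      = P.map (fun ω ↦ (W ω, V ω)) E := by
        rw [Measure.map_apply (hW.prodMk hV) hE]; rfl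
    _ = ∫⁻ v, S.indicator (fun v ↦ ENNReal.ofReal (cdf (P.map W) (h v))) v ∂P.map V := by
        rw [(indepFun_iff_map_prod_eq_prod_map_map hW.aemeasurable hV.aemeasurable).1 hWV,
          Measure.prod_apply_symm hE]
        simp_rw [hslice]
    _ = ∫⁻ ω in V ⁻¹' S, ENNReal.ofReal (cdf (P.map W) (h (V ω))) ∂P := by
        rw [lintegral_indicator hS, setLIntegral_map (f := fun v ↦ ENNReal.ofReal (cdf _ (h v))) hS
          ((cdf _).mono.measurable.comp hh).ennreal_ofReal hV]

theorem IndepFun.cond_le_comp (hWV : IndepFun W V P) (hW : Measurable W)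
    (hV : Measurable V) (hh : Measurable h) (hS : MeasurableSet S) :
    (P[{ω | W ω ≤ h (V ω)} | V ⁻¹' S]).toReal = ∫ ω, cdf (P.map W) (h (V ω)) ∂P[|V ⁻¹' S] := by
  rw [integral_eq_lintegral_of_nonneg_ae (f := fun ω ↦ cdf (P.map W) (h (V ω)))
      (ae_of_all _ fun _ ↦ cdf_nonneg _ _)
      ((cdf _).mono.measurable.comp (hh.comp hV)).aestronglyMeasurable, cond_apply (hV hS),
    hWV.measure_inter_le_comp hW hV hh hS, cond, lintegral_smul_measure, smul_eq_mul]

end Conditioning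

section Regression

variable [IsProbabilityMeasure P] {m t : ℕ} {X : Ω → Fin m → ℝ} {V : Ω → Fin t → ℝ}
  {Sxx : Matrix (Fin m) (Fin m) ℝ} {Sxv : Matrix (Fin m) (Fin t) ℝ}
  {Svv : Matrix (Fin t) (Fin t) ℝ}

theorem indepFun_regression_residual (hX : Measurable X) (hV : Measurable V) (hvv : Svv.PosDef)
    (hjoint : P.map (fun ω ↦ Fin.append (X ω) (V ω)) =
      _root_.multivariateGaussian 0 (blockCov Sxx Sxv Svv)) (x : Fin m → ℝ) :
    IndepFun (fun ω ↦ x ⬝ᵥ X ω - x ⬝ᵥ (Sxv * Svv⁻¹) *ᵥ V ω) V P := by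
  have hZ : AEMeasurable (fun ω ↦ Fin.append (X ω) (V ω)) P := (hX.finAppend hV).aemeasurable
  have hSc := blockCov_mulVec_append_neg_vecMul (Sxx := Sxx) (Sxv := Sxv)
    (isHermitian_iff_isSymm.1 hvv.isHermitian) ((isUnit_iff_isUnit_det _).1 hvv.isUnit) x
  have := (hasLaw_toLp_of_map_eq_multivariateGaussian hZ hjoint).indepFun_inner_of_mulVec_eq_zero
    (posSemidef_of_map_eq_multivariateGaussian hZ hjoint) _ (Fin.natAdd m)
    fun k ↦ by rw [ofLp_toLp, hSc, Fin.append_right, Pi.zero_apply]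
  simpa [inner_toLp_append_neg_vecMul] using this

theorem map_regression_residual (hX : Measurable X) (hV : Measurable V) (hvv : Svv.PosDef)
    (hjoint : P.map (fun ω ↦ Fin.append (X ω) (V ω)) =
      _root_.multivariateGaussian 0 (blockCov Sxx Sxv Svv)) (x : Fin m → ℝ) :
    P.map (fun ω ↦ x ⬝ᵥ X ω - x ⬝ᵥ (Sxv * Svv⁻¹) *ᵥ V ω) =
      gaussianReal 0 (x ⬝ᵥ (Sxx - Sxv * Svv⁻¹ * Sxvᵀ) *ᵥ x).toNNReal := by
  have hZ : AEMeasurable (fun ω ↦ Fin.append (X ω) (V ω)) P := (hX.finAppend hV).aemeasurable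
  have hSc := blockCov_mulVec_append_neg_vecMul (Sxx := Sxx) (Sxv := Sxv)
    (isHermitian_iff_isSymm.1 hvv.isHermitian) ((isUnit_iff_isUnit_det _).1 hvv.isUnit) x
  have := (hasLaw_toLp_of_map_eq_multivariateGaussian hZ hjoint).map_inner_multivariateGaussian
    (posSemidef_of_map_eq_multivariateGaussian hZ hjoint)
    (toLp 2 (Fin.append x (-(x ᵥ* (Sxv * Svv⁻¹)))))
  simpa [inner_toLp_append_neg_vecMul, hSc, Fin.append_dotProduct_append] using this

theorem cond_dotProduct_le_zero (hX : Measurable X) (hV : Measurable V) (hvv : Svv.PosDef)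
    (hjoint : P.map (fun ω ↦ Fin.append (X ω) (V ω)) =
      _root_.multivariateGaussian 0 (blockCov Sxx Sxv Svv))
    {S : Set (Fin t → ℝ)} (hS : MeasurableSet S) (x : Fin m → ℝ)
    (hx : 0 < x ⬝ᵥ (Sxx - Sxv * Svv⁻¹ * Sxvᵀ) *ᵥ x) :
    (P[{ω | x ⬝ᵥ X ω ≤ 0} | V ⁻¹' S]).toReal =
      ∫ ω, stdNormalCDF (-(x ⬝ᵥ (Sxv * Svv⁻¹) *ᵥ V ω) / √(x ⬝ᵥ (Sxx - Sxv * Svv⁻¹ * Sxvᵀ) *ᵥ x))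
        ∂P[|V ⁻¹' S] := by
  have hevent : {ω | x ⬝ᵥ X ω ≤ 0} =
      {ω | x ⬝ᵥ X ω - x ⬝ᵥ (Sxv * Svv⁻¹) *ᵥ V ω ≤ -(x ⬝ᵥ (Sxv * Svv⁻¹) *ᵥ V ω)} := by
    simp
  rw [hevent, (indepFun_regression_residual hX hV hvv hjoint x).cond_le_comp (by fun_prop) hV
    (h := fun v ↦ -(x ⬝ᵥ (Sxv * Svv⁻¹) *ᵥ v)) (by fun_prop) hS,
    map_regression_residual hX hV hvv hjoint x]
  simp_rw [cdf_gaussianReal_zero hx]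

end Regression

end ProbabilityTheory

theorem cond_duel_prob_eq_general {Ω : Type*} [MeasurableSpace Ω] {m t : ℕ}
    (P : Measure Ω) [IsProbabilityMeasure P]
    (X : Ω → (Fin m → ℝ)) (V : Ω → (Fin t → ℝ))
    (hX : Measurable X) (hV : Measurable V)
    (Sxx : Matrix (Fin m) (Fin m) ℝ) (Sxv : Matrix (Fin m) (Fin t) ℝ)
    (Svv : Matrix (Fin t) (Fin t) ℝ) (hvv : Svv.PosDef)
    (hjoint : P.map (fun ω => Fin.append (X ω) (V ω)) =
      _root_.multivariateGaussian 0 (blockCov Sxx Sxv Svv))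
    (S : Set (Fin t → ℝ)) (hS : MeasurableSet S)
    (i j : Fin m)
    (hs : 0 < (Sxx - Sxv * Svv⁻¹ * Sxvᵀ) i i + (Sxx - Sxv * Svv⁻¹ * Sxvᵀ) j j
      - 2 * (Sxx - Sxv * Svv⁻¹ * Sxvᵀ) i j) :
    ((P[|V ⁻¹' S]) {ω | X ω i ≤ X ω j}).toReal =
      ∫ ω, stdNormalCDF ((((Sxv * Svv⁻¹).mulVec (V ω)) j - ((Sxv * Svv⁻¹).mulVec (V ω)) i) /
        Real.sqrt ((Sxx - Sxv * Svv⁻¹ * Sxvᵀ) i i + (Sxx - Sxv * Svv⁻¹ * Sxvᵀ) j j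
          - 2 * (Sxx - Sxv * Svv⁻¹ * Sxvᵀ) i j)) ∂(P[|V ⁻¹' S]) := by
  have hPSD := posSemidef_of_map_eq_multivariateGaussian (hX.finAppend hV).aemeasurable hjoint
  have hquad := (isSymm_sub_mul_nonsing_inv_mul_transpose (Sxv := Sxv)
    (isSymm_of_isSymm_blockCov (isHermitian_iff_isSymm.1 hPSD.isHermitian))
    (isHermitian_iff_isSymm.1 hvv.isHermitian)).single_sub_single_dotProduct_mulVec i j
  have hevent : {ω | X ω i ≤ X ω j} = {ω | (Pi.single i 1 - Pi.single j 1) ⬝ᵥ X ω ≤ 0} := by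
    simp [sub_dotProduct]
  rw [hevent, cond_dotProduct_le_zero hX hV hvv hjoint hS _ (hquad ▸ hs), hquad]
  simp [sub_dotProduct]

/-- Duel-probability estimator:
`P(X_i ≤ X_j | V ∈ S) = E[Φ(((A V)_j − (A V)_i)/s) | V ∈ S]` with
`s² = (Σ_sch)_{ii} + (Σ_sch)_{jj} − 2(Σ_sch)_{ij}`. -/
theorem cond_duel_prob_eq {Ω : Type*} [MeasurableSpace Ω] {m t : ℕ}
    (P : Measure Ω) [IsProbabilityMeasure P]
    (X : Ω → (Fin m → ℝ)) (V : Ω → (Fin t → ℝ))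
    (hX : Measurable X) (hV : Measurable V)
    (Sxx : Matrix (Fin m) (Fin m) ℝ) (Sxv : Matrix (Fin m) (Fin t) ℝ)
    (Svv : Matrix (Fin t) (Fin t) ℝ) (hvv : Svv.PosDef)
    (hjoint : P.map (fun ω => Fin.append (X ω) (V ω)) =
      _root_.multivariateGaussian 0 (blockCov Sxx Sxv Svv))
    (S : Set (Fin t → ℝ)) (hS : MeasurableSet S) (hpos : 0 < P (V ⁻¹' S))
    (i j : Fin m)
    (hs : 0 < (Sxx - Sxv * Svv⁻¹ * Sxvᵀ) i i + (Sxx - Sxv * Svv⁻¹ * Sxvᵀ) j j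
      - 2 * (Sxx - Sxv * Svv⁻¹ * Sxvᵀ) i j) :
    ((P[|V ⁻¹' S]) {ω | X ω i ≤ X ω j}).toReal =
      ∫ ω, stdNormalCDF ((((Sxv * Svv⁻¹).mulVec (V ω)) j - ((Sxv * Svv⁻¹).mulVec (V ω)) i) /
        Real.sqrt ((Sxx - Sxv * Svv⁻¹ * Sxvᵀ) i i + (Sxx - Sxv * Svv⁻¹ * Sxvᵀ) j j
          - 2 * (Sxx - Sxv * Svv⁻¹ * Sxvᵀ) i j)) ∂(P[|V ⁻¹' S]) :=
  cond_duel_prob_eq_general P X V hX hV Sxx Sxv Svv hvv hjoint S hS i j hs
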